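/- (Tension between efficiency and speaker fairness) There exists an instance in which every schedule minimizing speaker unfairness Ψ^S has strictly smaller TEP than the efficiency-maximizing schedule. Concretely: with one participant p, two talks t_1, t_2 with V_p(t_1) = 1, V_p(t_2) = 0.5, and three slots with A_p = (1, 0.75, 0.8): the efficiency-maximizing schedule gives Γ(t_1)=s_1, Γ(t_2)=s_3 with TEP = 1.4 and speaker satisfactions (NEC) of 1 and 0.8; while the schedule Γ'(t_1)=s_3, Γ'(t_2)=s_2 achieves the minimum possible speaker unfairness Ψ^S = 0.05 (NEC values 0.8 and 0.75) but has TEP = 1.175 < 1.4. -/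

import Mathlib

/-! Every availability is at most `A s₁ = 1`, so the normalised crowd of a talk is just the
availability of its slot: `Ψ Γ = |A (Γ t₁) - A (Γ t₂)|` and `TEP Γ = A (Γ t₁) + A (Γ t₂) / 2`.
Among the distinct availabilities `1, 0.75, 0.8` the smallest gap is `0.05`, between `s₂` and `s₃`,
so any fair schedule leaves `s₁` unused and loses the participant's favourite slot. -/

namespace Stmt6

/-- Interest scores of the single participant for the two talks. -/
noncomputable def V : Fin 2 → ℝ := ![1, 0.5]

/-- Availability scores of the single participant over the three slots. -/
noncomputable def A : Fin 3 → ℝ := ![1, 0.75, 0.8]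

/-- Expected crowd at talk `t` under schedule `Γ`. -/
noncomputable def EC (t : Fin 2) (Γ : Fin 2 → Fin 3) : ℝ := V t * A (Γ t)

/-- Ideal expected crowd at talk `t` (best slot). -/
noncomputable def IEC (t : Fin 2) : ℝ := V t * max (A 0) (max (A 1) (A 2))

/-- Normalized expected crowd. -/
noncomputable def NEC (t : Fin 2) (Γ : Fin 2 → Fin 3) : ℝ := EC t Γ / IEC t

/-- Speaker unfairness. -/
noncomputable def Ψ (Γ : Fin 2 → Fin 3) : ℝ :=
  max (NEC 0 Γ) (NEC 1 Γ) - min (NEC 0 Γ) (NEC 1 Γ)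

/-- Total expected participation. -/
noncomputable def TEP (Γ : Fin 2 → Fin 3) : ℝ := V 0 * A (Γ 0) + V 1 * A (Γ 1)

/-- The efficiency-maximizing schedule: t₁ ↦ s₁, t₂ ↦ s₃. -/
def Γ₀ : Fin 2 → Fin 3 := ![0, 2]

/-- The speaker-fair schedule: t₁ ↦ s₃, t₂ ↦ s₂. -/
def Γ' : Fin 2 → Fin 3 := ![2, 1]

theorem max_A_eq_one : max (A 0) (max (A 1) (A 2)) = 1 := by
  norm_num [A, Matrix.cons_val_two]

theorem NEC_eq_A (t : Fin 2) (Γ : Fin 2 → Fin 3) : NEC t Γ = A (Γ t) := by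
  have hV : V t ≠ 0 := by fin_cases t <;> norm_num [V]
  rw [NEC, EC, IEC, max_A_eq_one, mul_one, mul_div_cancel_left₀ _ hV]

theorem Ψ_eq_abs (Γ : Fin 2 → Fin 3) : Ψ Γ = |A (Γ 0) - A (Γ 1)| := by
  rw [Ψ, NEC_eq_A, NEC_eq_A, max_sub_min_eq_abs']

theorem TEP_eq_A (Γ : Fin 2 → Fin 3) : TEP Γ = A (Γ 0) + A (Γ 1) / 2 := by
  norm_num [TEP, V]
  ring

theorem A_add_half_A_le {s s' : Fin 3} (h : s ≠ s') : A s + A s' / 2 ≤ 1.4 := by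
  revert h
  fin_cases s <;> fin_cases s' <;> norm_num [A]

theorem le_abs_A_sub_A {s s' : Fin 3} (h : s ≠ s') : 0.05 ≤ |A s - A s'| := by
  revert h
  fin_cases s <;> fin_cases s' <;> norm_num [A, abs_of_nonneg, abs_of_nonpos]

/-- tension between efficiency and speaker fairness. -/
theorem efficiency_speaker_fairness_tension :
    Function.Injective Γ₀ ∧ Function.Injective Γ'
    ∧ (∀ Γ : Fin 2 → Fin 3, Function.Injective Γ → TEP Γ ≤ TEP Γ₀)
    ∧ TEP Γ₀ = 1.4 ∧ NEC 0 Γ₀ = 1 ∧ NEC 1 Γ₀ = 0.8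
    ∧ (∀ Γ : Fin 2 → Fin 3, Function.Injective Γ → Ψ Γ' ≤ Ψ Γ)
    ∧ Ψ Γ' = 0.05 ∧ NEC 0 Γ' = 0.8 ∧ NEC 1 Γ' = 0.75
    ∧ TEP Γ' = 1.175 ∧ TEP Γ' < TEP Γ₀ := by
  have hTEP₀ : TEP Γ₀ = 1.4 := by norm_num [TEP_eq_A, Γ₀, A, Matrix.cons_val_two]
  have hTEP' : TEP Γ' = 1.175 := by norm_num [TEP_eq_A, Γ', A, Matrix.cons_val_two]
  have hΨ' : Ψ Γ' = 0.05 := by norm_num [Ψ_eq_abs, Γ', A, Matrix.cons_val_two]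
  refine ⟨by decide, by decide, fun Γ hΓ => ?_, hTEP₀, ?_, ?_, fun Γ hΓ => ?_, hΨ', ?_, ?_,
    hTEP', by rw [hTEP₀, hTEP']; norm_num⟩
  · rw [hTEP₀, TEP_eq_A]
    exact A_add_half_A_le (hΓ.ne (by decide))
  · norm_num [NEC_eq_A, Γ₀, A, Matrix.cons_val_two]
  · norm_num [NEC_eq_A, Γ₀, A, Matrix.cons_val_two]
  · rw [hΨ', Ψ_eq_abs]
    exact le_abs_A_sub_A (hΓ.ne (by decide))
  · norm_num [NEC_eq_A, Γ', A, Matrix.cons_val_two]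
  · norm_num [NEC_eq_A, Γ', A, Matrix.cons_val_two]

end Stmt6
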